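/- Let G be a countably infinite group. Then G contains 2^ℵ₀ pairwise coarsely non-equivalent thick subsets: there exists a family 𝔉 of thick subsets of G with |𝔉| = 2^ℵ₀ such that any two distinct members of 𝔉 are not coarsely equivalent as subsets of G. -/

import Mathlib

open Pointwise

/-- The ball `B_X(x, F) = ((F·x) ∪ {x}) ∩ X` in a subset `X` of a group `G`. -/
def ballIn {G : Type*} [Group G] (X : Set G) (F : Finset G) (x : G) : Set G :=
  ((F : Set G) * {x} ∪ {x}) ∩ X

/-- A bijection `f : X ≃ X'` between subsets of a group `G` is an asymorphism if
it is coarse in both directions. -/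
def IsAsymorphism {G : Type*} [Group G] (X X' : Set G) (f : X ≃ X') : Prop :=
  (∀ F : Finset G, ∃ F' : Finset G, ∀ x y : X,
      (y : G) ∈ (F : Set G) * {(x : G)} ∪ {(x : G)} →
      (f y : G) ∈ (F' : Set G) * {(f x : G)} ∪ {(f x : G)}) ∧
  (∀ F : Finset G, ∃ F' : Finset G, ∀ x y : X',
      (y : G) ∈ (F : Set G) * {(x : G)} ∪ {(x : G)} →
      (f.symm y : G) ∈ (F' : Set G) * {(f.symm x : G)} ∪ {(f.symm x : G)})

/-- `Y` is a large subset of `X` (subsets of a group `G`). -/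
def LargeIn {G : Type*} [Group G] (Y X : Set G) : Prop :=
  Y ⊆ X ∧ ∃ F : Finset G, X ⊆ (F : Set G) * Y ∪ Y

/-- Subsets `X, X'` of a group `G` are coarsely equivalent if some large subsets
of each are asymorphic. -/
def CoarselyEquiv {G : Type*} [Group G] (X X' : Set G) : Prop :=
  ∃ Y Y' : Set G, LargeIn Y X ∧ LargeIn Y' X' ∧ ∃ f : Y ≃ Y', IsAsymorphism Y Y' f

/-- `A ⊆ G` is thick: every finite `F ⊆ G` admits `g ∈ A` with `F·g ⊆ A`. -/
def Thick {G : Type*} [Group G] (A : Set G) : Prop :=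
  ∀ F : Finset G, ∃ g ∈ A, (F : Set G) * {g} ⊆ A

/-!
Enumerate `G`, let `F_n` be finite symmetric sets with `F_n F_n ∪ {g_n} ⊆ F_{n+1}` and put
`S_j = F_1 ⋯ F_j`. For a pattern `ε : ℕ → Bool`, `X_ε` is a union of blocks `S_{L k} z_i`, the
centres `z_i` spread so far apart that at any fixed scale a late block is isolated; block `i` has
a level `ℓ` and `k = 2ℓ + ε ℓ`, and the sizes `|S_{L k}|` grow faster than any constant factor.
Each `F_k` fits into a block, so `X_ε` is thick. An asymorphism between large subsets of `X_ε`
and `X_δ` carries the trace of a late level-`ℓ` block of `X_ε` onto an isolated ball of the other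
side, which lies in a single block. Around any of its points a block has `min r |S_j|` points
within scale `r + 3`, so that block has size comparable to the first one, which forces
`ε ℓ = δ ℓ` for all large `ℓ`. Spreading each `ε` over infinitely many levels gives `2^ℵ₀`
pairwise non-equivalent thick sets.
-/

open Filter Function

section Coarse

variable {G : Type*} [Group G]

theorem mem_mul_singleton_iff {s : Set G} {x y : G} : y ∈ s * {x} ↔ y * x⁻¹ ∈ s := by
  rw [Set.mul_singleton]
  exact ⟨fun ⟨a, ha, hax⟩ => by simpa [← hax] using ha, fun h => ⟨y * x⁻¹, h, by group⟩⟩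

theorem ncard_coe_mul_singleton (s : Finset G) (x : G) : ((s : Set G) * {x}).ncard = s.card := by
  rw [Set.mul_singleton, Set.ncard_image_of_injective _ (mul_left_injective x),
    Set.ncard_coe_finset]

theorem ncard_coe_mul_le (s : Finset G) (t : Set G) : ((s : Set G) * t).ncard ≤ s.card * t.ncard :=
  Set.ncard_coe_finset s ▸ Set.natCard_mul_le

theorem CoarselyEquiv.refl (X : Set G) : CoarselyEquiv X X :=
  ⟨X, X, ⟨subset_rfl, ∅, by simp⟩, ⟨subset_rfl, ∅, by simp⟩, Equiv.refl X,
    fun F => ⟨F, fun _ _ h => h⟩, fun F => ⟨F, fun _ _ h => h⟩⟩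

theorem IsAsymorphism.symm {X X' : Set G} {f : X ≃ X'} (hf : IsAsymorphism X X' f) :
    IsAsymorphism X' X f.symm :=
  ⟨hf.2, hf.1⟩

theorem exists_disjoint_translates [Infinite G] (T : ℕ → Set G) (U : ℕ → ℕ → Set G)
    (hT : ∀ i, (T i).Finite) (hU : ∀ i j, (U i j).Finite) :
    ∃ z : ℕ → G, ∀ ⦃i j⦄, j < i → Disjoint (T i * {z i}) (U i j * {z j}) := by
  have step : ∀ i (prev : ∀ j, j < i → G), ∃ g,
      ∀ j (hj : j < i), Disjoint (T i * {g}) (U i j * {prev j hj}) := by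
    intro i prev
    have hfin : (⋃ (j) (hj : j < i), (T i)⁻¹ * U i j * {prev j hj}).Finite :=
      (Set.finite_Iio i).biUnion' fun j _ => ((hT i).inv.mul (hU i j)).mul (Set.finite_singleton _)
    obtain ⟨g, hg⟩ := hfin.exists_notMem
    refine ⟨g, fun j hj => Set.disjoint_left.2 fun x hx hx' => hg ?_⟩
    rw [mem_mul_singleton_iff] at hx
    refine Set.mem_iUnion₂.2 ⟨j, hj, ?_⟩
    have : g = (x * g⁻¹)⁻¹ * x := by group
    rw [this, mul_assoc]
    exact Set.mul_mem_mul (Set.inv_mem_inv.2 hx) hx'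
  choose next hnext using step
  refine ⟨fun i => Nat.strongRec (motive := fun _ => G) next i, fun i j hj => ?_⟩
  dsimp only
  rw [Nat.strongRec_eq next i]
  exact hnext i _ j hj

end Coarse

section Filtration

variable {G : Type*} [Group G] [DecidableEq G] (e : ℕ ≃ G)

def filtration : ℕ → Finset G
  | 0 => {1}
  | n + 1 =>
    let T := filtration n * filtration n ∪ {e n}
    T ∪ T⁻¹

theorem mul_subset_filtration_succ (n : ℕ) :
    filtration e n * filtration e n ⊆ filtration e (n + 1) :=
  Finset.subset_union_left.trans Finset.subset_union_left

theorem apply_mem_filtration_succ (n : ℕ) : e n ∈ filtration e (n + 1) :=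
  Finset.subset_union_left (Finset.mem_union_right _ (Finset.mem_singleton_self _))

theorem one_mem_filtration (n : ℕ) : (1 : G) ∈ filtration e n := by
  induction n with
  | zero => exact Finset.mem_singleton_self 1
  | succ n ih => simpa using mul_subset_filtration_succ e n (Finset.mul_mem_mul ih ih)

theorem inv_mem_filtration {n : ℕ} {x : G} (hx : x ∈ filtration e n) : x⁻¹ ∈ filtration e n := by
  cases n with
  | zero => simp_all [filtration]
  | succ n =>
    simp only [filtration, Finset.mem_union, Finset.mem_inv', inv_inv] at hx ⊢
    exact hx.symm

theorem filtration_mono : Monotone (filtration e) :=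
  monotone_nat_of_le_succ fun n =>
    (Finset.subset_mul_left _ (one_mem_filtration e n)).trans (mul_subset_filtration_succ e n)

theorem mul_mem_filtration {k m n : ℕ} {x y : G} (hm : m ≤ k) (hn : n ≤ k)
    (hx : x ∈ filtration e m) (hy : y ∈ filtration e n) : x * y ∈ filtration e (k + 1) :=
  mul_subset_filtration_succ e k
    (Finset.mul_mem_mul (filtration_mono e hm hx) (filtration_mono e hn hy))

theorem le_card_filtration (n : ℕ) : n ≤ (filtration e n).card := by
  calc n = ((Finset.range n).image e).card := by
        rw [Finset.card_image_of_injective _ e.injective, Finset.card_range]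
    _ ≤ (filtration e n).card := Finset.card_le_card fun x hx => by
        obtain ⟨k, hk, rfl⟩ := Finset.mem_image.1 hx
        exact filtration_mono e (Finset.mem_range.1 hk) (apply_mem_filtration_succ e k)

theorem exists_subset_filtration (s : Finset G) : ∃ n, s ⊆ filtration e n :=
  ⟨s.sup fun x => e.symm x + 1, fun x hx => by
    simpa using filtration_mono e (Finset.le_sup (f := fun x => e.symm x + 1) hx)
      (apply_mem_filtration_succ e (e.symm x))⟩

theorem LargeIn.exists_subset_filtration_mul {Y X : Set G} (h : LargeIn Y X) :
    ∃ c, X ⊆ (filtration e c : Set G) * Y := by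
  obtain ⟨-, F, hF⟩ := h
  obtain ⟨c, hc⟩ := exists_subset_filtration e F
  refine ⟨c, hF.trans (Set.union_subset (Set.mul_subset_mul_right (by exact_mod_cast hc)) ?_)⟩
  exact Set.subset_mul_right Y (by exact_mod_cast one_mem_filtration e c)

theorem IsAsymorphism.exists_filtration_bound {X X' : Set G} {f : X ≃ X'}
    (hf : IsAsymorphism X X' f) (a : ℕ) : ∃ σ, ∀ x y : X,
      (y : G) * (x : G)⁻¹ ∈ filtration e a → (f y : G) * (f x : G)⁻¹ ∈ filtration e σ := by
  obtain ⟨F', hF'⟩ := hf.1 (filtration e a)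
  obtain ⟨σ, hσ⟩ := exists_subset_filtration e F'
  refine ⟨σ, fun x y hxy => ?_⟩
  rcases hF' x y (Or.inl (mem_mul_singleton_iff.2 hxy)) with h | h
  · exact hσ (mem_mul_singleton_iff.1 h)
  · rw [Set.mem_singleton_iff.1 h, mul_inv_cancel]
    exact one_mem_filtration e σ

end Filtration

section PrefixProd

variable {G : Type*} [Group G] [DecidableEq G] (e : ℕ ≃ G)

def prefixProd : ℕ → Finset G
  | 0 => 1
  | j + 1 => prefixProd j * filtration e (j + 1)

theorem one_mem_prefixProd (j : ℕ) : (1 : G) ∈ prefixProd e j := by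
  induction j with
  | zero => exact Finset.one_mem_one
  | succ j ih => simpa [prefixProd] using Finset.mul_mem_mul ih (one_mem_filtration e (j + 1))

theorem prefixProd_mono : Monotone (prefixProd e) :=
  monotone_nat_of_le_succ fun j => Finset.subset_mul_left _ (one_mem_filtration e (j + 1))

theorem prefixProd_subset_filtration (j : ℕ) : prefixProd e j ⊆ filtration e (j + 1) := by
  induction j with
  | zero => simpa [prefixProd] using one_mem_filtration e 1
  | succ j ih =>
    intro _ hxy
    obtain ⟨x, hx, y, hy, rfl⟩ := Finset.mem_mul.1 hxy
    exact mul_mem_filtration e le_rfl le_rfl (ih hx) hy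

theorem filtration_subset_prefixProd (j : ℕ) : filtration e j ⊆ prefixProd e j := by
  cases j with
  | zero => exact fun x hx => by simp_all [filtration, prefixProd]
  | succ j => exact Finset.subset_mul_right _ (one_mem_prefixProd e j)

theorem le_card_prefixProd (j : ℕ) : j ≤ (prefixProd e j).card :=
  (le_card_filtration e j).trans (Finset.card_le_card (filtration_subset_prefixProd e j))

theorem exists_prefixProd_eq_mul {r j : ℕ} (h : r ≤ j) :
    ∃ R, prefixProd e j = prefixProd e r * R := by
  induction j, h using Nat.le_induction with
  | base => exact ⟨1, (mul_one _).symm⟩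
  | succ j _ ih =>
    obtain ⟨R, hR⟩ := ih
    exact ⟨R * filtration e (j + 1), by rw [prefixProd, hR, mul_assoc]⟩

theorem mul_inv_mem_of_mem_prefixProd_mul {j : ℕ} {z u v : G}
    (hu : u ∈ (prefixProd e j : Set G) * {z}) (hv : v ∈ (prefixProd e j : Set G) * {z}) :
    v * u⁻¹ ∈ filtration e (j + 2) := by
  rw [mem_mul_singleton_iff, Finset.mem_coe] at hu hv
  have : v * u⁻¹ = v * z⁻¹ * (u * z⁻¹)⁻¹ := by group
  rw [this]
  exact mul_mem_filtration e le_rfl le_rfl (prefixProd_subset_filtration e j hv)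
    (inv_mem_filtration e (prefixProd_subset_filtration e j hu))

/-- Writing `u = p a q z` with `p ∈ S_{r-1}`, `a ∈ F_r`, the points `p a' q z`, `a' ∈ F_r`, are
`|F_r|` points of `S_j z` at distance `p a' a⁻¹ p⁻¹ ∈ F_{r+3}` from `u`. -/
theorem min_le_ncard_prefixProd_mul_inter (j r : ℕ) {z u : G}
    (hu : u ∈ (prefixProd e j : Set G) * {z}) :
    min r (prefixProd e j).card ≤
      ((prefixProd e j : Set G) * {z} ∩ ((filtration e (r + 3) : Set G) * {u})).ncard := by
  have hfin : ((prefixProd e j : Set G) * {z}).Finite :=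
    (Finset.finite_toSet _).mul (Set.finite_singleton z)
  rcases lt_or_ge j r with hjr | hrj
  · have hsub : (prefixProd e j : Set G) * {z} ⊆ (filtration e (r + 3) : Set G) * {u} :=
      fun v hv => mem_mul_singleton_iff.2 <|
        filtration_mono e (by omega) (mul_inv_mem_of_mem_prefixProd_mul e hu hv)
    rw [Set.inter_eq_left.2 hsub, ncard_coe_mul_singleton]
    exact min_le_right _ _
  obtain _ | r := r
  · exact (min_le_left _ _).trans (Nat.zero_le _)
  obtain ⟨R, hR⟩ := exists_prefixProd_eq_mul e hrj
  rw [mem_mul_singleton_iff, Finset.mem_coe, hR, prefixProd] at hu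
  obtain ⟨_, hpa, q, hq, hpaq⟩ := Finset.mem_mul.1 hu
  obtain ⟨p, hp, a, ha, rfl⟩ := Finset.mem_mul.1 hpa
  have hpF : p ∈ filtration e (r + 1) := prefixProd_subset_filtration e r hp
  set T := (fun a' => p * a' * q * z) '' (filtration e (r + 1) : Set G)
  have hT : T ⊆ (prefixProd e j : Set G) * {z} ∩ ((filtration e (r + 1 + 3) : Set G) * {u}) := by
    rintro _ ⟨a', ha', rfl⟩
    refine ⟨mem_mul_singleton_iff.2 ?_, mem_mul_singleton_iff.2 ?_⟩
    · rw [mul_inv_cancel_right, Finset.mem_coe, hR]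
      exact Finset.mul_mem_mul (Finset.mul_mem_mul hp ha') hq
    · have hu' : u = p * a * q * z := by rw [hpaq, inv_mul_cancel_right]
      have : p * a' * q * z * u⁻¹ = p * (a' * a⁻¹) * p⁻¹ := by rw [hu']; group
      rw [this]
      exact mul_mem_filtration e (k := r + 3) (by omega) (by omega)
        (mul_mem_filtration e (k := r + 2) (by omega) (by omega) hpF
          (mul_mem_filtration e le_rfl le_rfl ha' (inv_mem_filtration e ha)))
        (inv_mem_filtration e hpF)
  calc min (r + 1) (prefixProd e j).card ≤ (filtration e (r + 1)).card :=
        (min_le_left _ _).trans (le_card_filtration e _)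
    _ = T.ncard := by
        rw [Set.ncard_image_of_injective _ fun x y h => by simpa using h, Set.ncard_coe_finset]
    _ ≤ _ := Set.ncard_le_ncard hT (hfin.inter_of_left _)

end PrefixProd

section Blocks

variable {G : Type*} [Group G] [DecidableEq G] (e : ℕ ≃ G)

/-- The recursion gives `|S_{L (k+1)}| ≥ L (k+1) > (k+1) |S_{L k}|`. -/
def blockLength : ℕ → ℕ
  | 0 => 0
  | k + 1 => (k + 1) * (prefixProd e (blockLength k)).card + 1

theorem blockLength_strictMono : StrictMono (blockLength e) :=
  strictMono_nat_of_lt_succ fun k => by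
    have := le_card_prefixProd e (blockLength e k)
    show blockLength e k < (k + 1) * _ + 1
    nlinarith

theorem mul_card_lt_card_prefixProd_blockLength {b d M : ℕ} (hbd : b < d) (hM : M ≤ d) :
    M * (prefixProd e (blockLength e b)).card < (prefixProd e (blockLength e d)).card := by
  obtain ⟨d, rfl⟩ : ∃ d', d = d' + 1 := ⟨d - 1, by omega⟩
  calc M * (prefixProd e (blockLength e b)).card
      ≤ (d + 1) * (prefixProd e (blockLength e d)).card :=
        Nat.mul_le_mul hM (Finset.card_le_card (prefixProd_mono e
          ((blockLength_strictMono e).monotone (by omega))))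
    _ < blockLength e (d + 1) := Nat.lt_succ_self _
    _ ≤ _ := le_card_prefixProd e _

theorem not_card_prefixProd_blockLength_le_mul {b d M : ℕ} (hbd : b ≠ d) (hM : M ≤ max b d) :
    ¬ ((prefixProd e (blockLength e b)).card ≤ M * (prefixProd e (blockLength e d)).card ∧
      (prefixProd e (blockLength e d)).card ≤ M * (prefixProd e (blockLength e b)).card) := by
  rintro ⟨hbd', hdb'⟩
  rcases Nat.lt_or_gt_of_ne hbd with h | h
  · exact (mul_card_lt_card_prefixProd_blockLength e h (by omega)).not_ge hdb'
  · exact (mul_card_lt_card_prefixProd_blockLength e h (by omega)).not_ge hbd'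

def levelCode (ε : ℕ → Bool) (ℓ : ℕ) : ℕ := 2 * ℓ + (ε ℓ).toNat

theorem levelCode_ne {ε δ : ℕ → Bool} {ℓ : ℕ} (h : ε ℓ ≠ δ ℓ) (ℓ' : ℕ) :
    levelCode δ ℓ' ≠ levelCode ε ℓ := by
  intro heq
  have := Bool.toNat_le (δ ℓ')
  have := Bool.toNat_le (ε ℓ)
  unfold levelCode at heq
  obtain rfl : ℓ = ℓ' := by omega
  cases hε : ε ℓ <;> cases hδ : δ ℓ <;> simp_all

/-- Block `i` sits at level `(unpair i).1`, so every level carries infinitely many blocks. -/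
def blockShape (ε : ℕ → Bool) (i : ℕ) : ℕ := blockLength e (levelCode ε (Nat.unpair i).1)

theorem blockShape_le (ε : ℕ → Bool) (i : ℕ) : blockShape e ε i ≤ blockLength e (2 * i + 1) :=
  (blockLength_strictMono e).monotone <| by
    have := Nat.unpair_left_le i
    have := Bool.toNat_le (ε (Nat.unpair i).1)
    unfold levelCode; omega

def block (z : ℕ → G) (ε : ℕ → Bool) (i : ℕ) : Set G :=
  (prefixProd e (blockShape e ε i) : Set G) * {z i}

def thickSet (z : ℕ → G) (ε : ℕ → Bool) : Set G := ⋃ i, block e z ε i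

/-- `S_{L (2i+1)}` contains the `i`-th block of every pattern (`blockShape_le`), so one choice
of centres serves all patterns. -/
def IsSeparated (z : ℕ → G) : Prop :=
  ∀ ⦃i j⦄, j < i → Disjoint ((prefixProd e (blockLength e (2 * i + 1)) : Set G) * {z i})
    ((filtration e i : Set G) * (prefixProd e (blockLength e (2 * j + 1)) : Set G) * {z j})

theorem exists_isSeparated [Infinite G] : ∃ z : ℕ → G, IsSeparated e z :=
  exists_disjoint_translates _
    (fun i j => (filtration e i : Set G) * (prefixProd e (blockLength e (2 * j + 1)) : Set G))
    (fun _ => Finset.finite_toSet _) fun _ _ => (Finset.finite_toSet _).mul (Finset.finite_toSet _)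

variable {e} {z : ℕ → G}

theorem block_subset (ε : ℕ → Bool) (i : ℕ) :
    block e z ε i ⊆ (prefixProd e (blockLength e (2 * i + 1)) : Set G) * {z i} :=
  Set.mul_subset_mul_right (by exact_mod_cast prefixProd_mono e (blockShape_le e ε i))

theorem disjoint_filtration_mul_block (hz : IsSeparated e z) (ε δ : ℕ → Bool) {i i' s : ℕ}
    (hii' : i ≠ i') (hs : s ≤ max i i') :
    Disjoint ((filtration e s : Set G) * block e z ε i) (block e z δ i') := by
  rw [Set.disjoint_left]
  rintro _ ⟨g, hg, y, hy, rfl⟩ hx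
  rcases Nat.lt_or_gt_of_ne hii' with h | h
  · refine Set.disjoint_left.1 (hz h) (block_subset δ i' hx) ?_
    rw [mul_assoc]
    exact Set.mul_mem_mul (filtration_mono e (by omega) hg) (block_subset ε i hy)
  · refine Set.disjoint_left.1 (hz h) (block_subset ε i hy) ?_
    rw [mul_assoc, show y = g⁻¹ * (g * y) by group]
    exact Set.mul_mem_mul (inv_mem_filtration e (filtration_mono e (by omega) hg))
      (block_subset δ i' hx)

theorem pairwise_disjoint_block (hz : IsSeparated e z) (ε : ℕ → Bool) :
    Pairwise (Disjoint on (block e z ε)) := fun i i' h => by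
  simpa [filtration] using disjoint_filtration_mul_block hz ε ε h (Nat.zero_le _)

theorem mem_block_of_mul_inv_mem (hz : IsSeparated e z) {ε : ℕ → Bool} {i s : ℕ} {x y : G}
    (hy : y ∈ thickSet e z ε) (hx : x ∈ block e z ε i) (hyx : y * x⁻¹ ∈ filtration e s)
    (hs : s ≤ i) : y ∈ block e z ε i := by
  obtain ⟨i', hi'⟩ := Set.mem_iUnion.1 hy
  obtain rfl | hii' := eq_or_ne i i'
  · exact hi'
  refine absurd hi' <| Set.disjoint_left.1
    (disjoint_filtration_mul_block hz ε ε hii' (s := s) (by omega)) ?_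
  rw [show y = y * x⁻¹ * x by group]
  exact Set.mul_mem_mul hyx hx

theorem ncard_block (ε : ℕ → Bool) (i : ℕ) :
    (block e z ε i).ncard = (prefixProd e (blockShape e ε i)).card :=
  ncard_coe_mul_singleton _ _

theorem thick_thickSet (ε : ℕ → Bool) : Thick (thickSet e z ε) := by
  intro F
  obtain ⟨k, hk⟩ := exists_subset_filtration e F
  have hkS : F ⊆ prefixProd e (blockShape e ε (Nat.pair k 0)) := by
    refine hk.trans <| (filtration_mono e ?_).trans (filtration_subset_prefixProd e _)
    rw [blockShape, Nat.unpair_pair]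
    exact (blockLength_strictMono e).le_apply.trans' (by unfold levelCode; omega)
  refine ⟨z (Nat.pair k 0), Set.mem_iUnion_of_mem (Nat.pair k 0) ?_,
    fun x hx => Set.mem_iUnion_of_mem (Nat.pair k 0) ?_⟩
  · exact mem_mul_singleton_iff.2 (by simpa using one_mem_prefixProd e _)
  · exact Set.mul_subset_mul_right (by exact_mod_cast hkS) hx

theorem exists_block_disjoint (hz : IsSeparated e z) (ε : ℕ → Bool) {T : Set G} (hT : T.Finite)
    (ℓ N : ℕ) : ∃ i, blockShape e ε i = blockLength e (levelCode ε ℓ) ∧ N ≤ i ∧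
      Disjoint (block e z ε i) T := by
  have hbad : {i | ¬ Disjoint (block e z ε i) T}.Finite := by
    refine (hT.biUnion fun t _ =>
      Set.Subsingleton.finite (s := {i | t ∈ block e z ε i}) ?_).subset ?_
    · intro i hi i' hi'
      by_contra h
      exact Set.disjoint_left.1 (pairwise_disjoint_block hz ε h) hi hi'
    · intro i hi
      obtain ⟨t, hti, htT⟩ := Set.not_disjoint_iff.1 hi
      exact Set.mem_biUnion htT hti
  have hpair : Tendsto (Nat.pair ℓ) atTop atTop :=
    tendsto_atTop_mono (Nat.right_le_pair ℓ) tendsto_id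
  obtain ⟨m, hm, hN⟩ :=
    ((hpair.eventually (Nat.cofinite_eq_atTop ▸ hbad.eventually_cofinite_notMem)).and
      (hpair.eventually (eventually_ge_atTop N))).exists
  exact ⟨Nat.pair ℓ m, by rw [blockShape, Nat.unpair_pair], hN, not_not.1 hm⟩

end Blocks

section Rigidity

variable {G : Type*} [Group G] [DecidableEq G] {e : ℕ ≃ G} {z : ℕ → G}

theorem finite_block (ε : ℕ → Bool) (i : ℕ) : (block e z ε i).Finite :=
  (Finset.finite_toSet _).mul (Set.finite_singleton _)

theorem card_le_mul_ncard_inter_block (hz : IsSeparated e z) {ε : ℕ → Bool} {Y : Set G}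
    {c i : ℕ} (hYX : Y ⊆ thickSet e z ε) (hXY : thickSet e z ε ⊆ (filtration e c : Set G) * Y)
    (hci : c ≤ i) :
    (prefixProd e (blockShape e ε i)).card ≤ (filtration e c).card * (Y ∩ block e z ε i).ncard := by
  have hdense : block e z ε i ⊆ (filtration e c : Set G) * (Y ∩ block e z ε i) := by
    intro x hx
    obtain ⟨g, hg, y, hy, rfl⟩ := hXY (Set.mem_iUnion_of_mem i hx)
    refine Set.mul_mem_mul hg ⟨hy, mem_block_of_mul_inv_mem hz (hYX hy) hx ?_ hci⟩
    simpa using inv_mem_filtration e hg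
  rw [← ncard_block]
  exact (Set.ncard_le_ncard hdense ((Finset.finite_toSet _).mul
    ((finite_block ε i).subset Set.inter_subset_right))).trans (ncard_coe_mul_le _ _)

/-- `f` maps `Y ∩ block i` onto the ball `Y' ∩ F_σ (f x₀)`, which the backward bound isolates
in `Y'` up to scale `t`. -/
theorem image_inter_block_eq_ball (hz : IsSeparated e z) {ε : ℕ → Bool} {Y Y' : Set G}
    (hYX : Y ⊆ thickSet e z ε) (f : Y ≃ Y') {i σ t τ : ℕ}
    (hfwd : ∀ x y : Y, (y : G) * (x : G)⁻¹ ∈ filtration e (blockShape e ε i + 2) →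
      (f y : G) * (f x : G)⁻¹ ∈ filtration e σ)
    (hbwd : ∀ x y : Y', (y : G) * (x : G)⁻¹ ∈ filtration e t →
      (f.symm y : G) * (f.symm x : G)⁻¹ ∈ filtration e τ)
    (hτi : τ ≤ i) (hσt : σ ≤ t) (x₀ : Y) (hx₀ : (x₀ : G) ∈ block e z ε i) :
    (∀ y ∈ Y', y * (f x₀ : G)⁻¹ ∈ filtration e t → y * (f x₀ : G)⁻¹ ∈ filtration e σ) ∧
      (Y' ∩ ((filtration e σ : Set G) * {(f x₀ : G)})).ncard = (Y ∩ block e z ε i).ncard := by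
  have hto : ∀ x : Y, (x : G) ∈ block e z ε i → (f x : G) * (f x₀ : G)⁻¹ ∈ filtration e σ :=
    fun x hx => hfwd x₀ x (mul_inv_mem_of_mem_prefixProd_mul e hx₀ hx)
  have hback : ∀ y : Y', (y : G) * (f x₀ : G)⁻¹ ∈ filtration e t →
      (f.symm y : G) ∈ block e z ε i := fun y hy => by
    have := hbwd (f x₀) y hy
    rw [Equiv.symm_apply_apply] at this
    exact mem_block_of_mul_inv_mem hz (hYX (f.symm y).2) hx₀ this hτi
  refine ⟨fun y hy hyt => by simpa using hto _ (hback ⟨y, hy⟩ hyt), Eq.symm ?_⟩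
  refine Set.ncard_congr (fun a ha => (f ⟨a, ha.1⟩ : G))
    (fun a ha => ⟨(f _).2, mem_mul_singleton_iff.2 (hto ⟨a, ha.1⟩ ha.2)⟩)
    (fun a b ha hb h => congrArg Subtype.val (f.injective (Subtype.ext h))) ?_
  rintro y ⟨hy, hyσ⟩
  refine ⟨f.symm ⟨y, hy⟩, ⟨(f.symm _).2, hback ⟨y, hy⟩ ?_⟩, by simp⟩
  exact filtration_mono e hσt (mem_mul_singleton_iff.1 hyσ)

/-- Points of block `β` near `p` are `F_{c'}`-close to `Y'`, hence, by the gap, to the ball. -/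
theorem min_le_mul_ncard_ball (hz : IsSeparated e z) {δ : ℕ → Bool} {Y' : Set G}
    {c' r t σ β : ℕ} {p : G} (hY'X : Y' ⊆ thickSet e z δ)
    (hXY' : thickSet e z δ ⊆ (filtration e c' : Set G) * Y') (hp : p ∈ block e z δ β)
    (hσβ : σ ≤ β) (ht : max c' (r + 3) < t)
    (hgap : ∀ y ∈ Y', y * p⁻¹ ∈ filtration e t → y * p⁻¹ ∈ filtration e σ) :
    Y' ∩ ((filtration e σ : Set G) * {p}) ⊆ block e z δ β ∧
      min r (prefixProd e (blockShape e δ β)).card ≤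
        (filtration e c').card * (Y' ∩ ((filtration e σ : Set G) * {p})).ncard := by
  set D := Y' ∩ ((filtration e σ : Set G) * {p})
  have hD : D ⊆ block e z δ β := fun y hy =>
    mem_block_of_mul_inv_mem hz (hY'X hy.1) hp (mem_mul_singleton_iff.1 hy.2) hσβ
  refine ⟨hD, ?_⟩
  have hcover : block e z δ β ∩ ((filtration e (r + 3) : Set G) * {p}) ⊆
      (filtration e c' : Set G) * D := by
    rintro x ⟨hxβ, hxp⟩
    obtain ⟨g, hg, y, hy, rfl⟩ := hXY' (Set.mem_iUnion_of_mem β hxβ)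
    refine Set.mul_mem_mul hg ⟨hy, mem_mul_singleton_iff.2 (hgap y hy ?_)⟩
    rw [show y * p⁻¹ = g⁻¹ * (g * y * p⁻¹) by group]
    exact filtration_mono e ht (mul_mem_filtration e (le_max_left _ _) (le_max_right _ _)
      (inv_mem_filtration e hg) (mem_mul_singleton_iff.1 hxp))
  calc min r (prefixProd e (blockShape e δ β)).card
      ≤ (block e z δ β ∩ ((filtration e (r + 3) : Set G) * {p})).ncard :=
        min_le_ncard_prefixProd_mul_inter e _ r hp
    _ ≤ ((filtration e c' : Set G) * D).ncard :=
        Set.ncard_le_ncard hcover ((Finset.finite_toSet _).mul ((finite_block δ β).subset hD))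
    _ ≤ (filtration e c').card * D.ncard := ncard_coe_mul_le _ _

theorem exists_block_image_far (hz : IsSeparated e z) (ε δ : ℕ → Bool) {Y Y' : Set G}
    (f : Y ≃ Y') (ℓ N σ : ℕ) : ∃ i, blockShape e ε i = blockLength e (levelCode ε ℓ) ∧ N ≤ i ∧
      ∀ x : Y, (x : G) ∈ block e z ε i → ∀ β, (f x : G) ∈ block e z δ β → σ ≤ β := by
  have hT : (Subtype.val '' {x : Y | ∃ β < σ, (f x : G) ∈ block e z δ β}).Finite := by
    have hJ : (⋃ β ∈ Set.Iio σ, block e z δ β).Finite :=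
      (Set.finite_Iio σ).biUnion fun β _ => finite_block δ β
    refine ((hJ.preimage (Subtype.val_injective.comp f.injective).injOn).image
      Subtype.val).subset ?_
    rintro _ ⟨x, ⟨β, hβ, hx⟩, rfl⟩
    exact ⟨x, Set.mem_biUnion hβ hx, rfl⟩
  obtain ⟨i, hiℓ, hN, hdisj⟩ := exists_block_disjoint hz ε hT ℓ N
  exact ⟨i, hiℓ, hN, fun x hx β hβ =>
    not_lt.1 fun hlt => Set.disjoint_left.1 hdisj hx ⟨x, ⟨β, hlt, hβ⟩, rfl⟩⟩

end Rigidity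

theorem not_coarselyEquiv_thickSet {G : Type*} [Group G] [DecidableEq G] {e : ℕ ≃ G}
    {z : ℕ → G} (hz : IsSeparated e z) {ε δ : ℕ → Bool} (hεδ : ∃ᶠ ℓ in atTop, ε ℓ ≠ δ ℓ) :
    ¬ CoarselyEquiv (thickSet e z ε) (thickSet e z δ) := by
  rintro ⟨Y, Y', hY, hY', f, hf⟩
  obtain ⟨c, hc⟩ := hY.exists_subset_filtration_mul e
  obtain ⟨c', hc'⟩ := hY'.exists_subset_filtration_mul e
  set K := (filtration e c).card
  set K' := (filtration e c').card
  obtain ⟨ℓ, hεδℓ, hℓ⟩ := (hεδ.and_eventually (eventually_ge_atTop (K + K'))).exists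
  obtain ⟨W, hW⟩ : ∃ W, (prefixProd e (blockLength e (levelCode ε ℓ))).card = W := ⟨_, rfl⟩
  obtain ⟨σ, hσ⟩ := hf.exists_filtration_bound e (blockLength e (levelCode ε ℓ) + 2)
  obtain ⟨τ, hτ⟩ := hf.symm.exists_filtration_bound e (max (max c' (K' * W + 4) + 1) σ)
  obtain ⟨i, hiℓ, hi, hfar⟩ := exists_block_image_far hz ε δ f ℓ (max c τ) σ
  rw [← hiℓ] at hW hσ
  have hWP : W ≤ K * (Y ∩ block e z ε i).ncard :=
    hW ▸ card_le_mul_ncard_inter_block hz hY.1 hc (le_of_max_le_left hi)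
  have hPW : (Y ∩ block e z ε i).ncard ≤ W :=
    hW ▸ (Set.ncard_le_ncard Set.inter_subset_right (finite_block ε i)).trans_eq (ncard_block ε i)
  have hW0 : 0 < W := hW ▸ Finset.card_pos.2 ⟨1, one_mem_prefixProd e _⟩
  obtain ⟨x₀, hx₀Y, hx₀⟩ : (Y ∩ block e z ε i).Nonempty :=
    Set.nonempty_of_ncard_ne_zero fun h => by rw [h, mul_zero] at hWP; omega
  obtain ⟨β, hβ⟩ := Set.mem_iUnion.1 (hY'.1 (f ⟨x₀, hx₀Y⟩).2)
  obtain ⟨hgap, hcard⟩ := image_inter_block_eq_ball hz hY.1 f hσ hτ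
    (le_of_max_le_right hi) (le_max_right _ _) ⟨x₀, hx₀Y⟩ hx₀
  obtain ⟨hsub, hmin⟩ := min_le_mul_ncard_ball (r := K' * W + 1) hz hY'.1 hc' hβ
    (hfar _ hx₀ β hβ) (by omega) hgap
  have hDV := (Set.ncard_le_ncard hsub (finite_block δ β)).trans_eq (ncard_block δ β)
  have hVW : (prefixProd e (blockShape e δ β)).card ≤ K' * W :=
    (min_le_iff.1 (hmin.trans (Nat.mul_le_mul_left K' (hcard ▸ hPW)))).resolve_left (by omega)
  refine not_card_prefixProd_blockLength_le_mul e (levelCode_ne hεδℓ (Nat.unpair β).1).symm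
    (M := K + K') (by unfold levelCode; omega) ⟨?_, ?_⟩
  · rw [← hiℓ, hW]
    exact hWP.trans (Nat.mul_le_mul (by omega) (hcard ▸ hDV))
  · rw [← hiℓ, hW]
    exact hVW.trans (Nat.mul_le_mul_right _ (by omega))

theorem frequently_ne_comp_unpair {ε δ : ℕ → Bool} (h : ε ≠ δ) :
    ∃ᶠ ℓ in atTop, ε (Nat.unpair ℓ).1 ≠ δ (Nat.unpair ℓ).1 := by
  obtain ⟨k, hk⟩ := Function.ne_iff.1 h
  exact frequently_atTop.2 fun N => ⟨Nat.pair k N, Nat.right_le_pair k N, by simpa using hk⟩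

/-- Every countably infinite group `G` contains `2^ℵ₀` pairwise non-coarsely-equivalent
thick subsets. -/
theorem countable_group_continuum_thick_coarse_subsets
    (G : Type*) [Group G] [Countable G] [Infinite G] :
    ∃ 𝔉 : Set (Set G),
      (∀ A ∈ 𝔉, Thick A) ∧
      Cardinal.mk 𝔉 = 2 ^ Cardinal.aleph0 ∧
      ∀ A ∈ 𝔉, ∀ B ∈ 𝔉, A ≠ B → ¬ CoarselyEquiv A B := by
  classical
  obtain ⟨_⟩ := nonempty_denumerable G
  set e := (Denumerable.eqv G).symm
  obtain ⟨z, hz⟩ := exists_isSeparated e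
  set X : (ℕ → Bool) → Set G := fun ε => thickSet e z fun ℓ => ε (Nat.unpair ℓ).1
  have hX : ∀ ε δ, ε ≠ δ → ¬ CoarselyEquiv (X ε) (X δ) := fun ε δ h =>
    not_coarselyEquiv_thickSet hz (frequently_ne_comp_unpair h)
  have hXinj : Injective X := fun ε δ h =>
    by_contra fun hne => hX ε δ hne (h ▸ CoarselyEquiv.refl (X ε))
  refine ⟨Set.range X, Set.forall_mem_range.2 fun ε => thick_thickSet _, ?_, ?_⟩
  · have h := Cardinal.mk_range_eq_of_injective hXinj
    rw [Cardinal.lift_id', ← Cardinal.power_def, Cardinal.mk_bool, Cardinal.mk_nat] at h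
    simpa using h
  · rintro _ ⟨ε, rfl⟩ _ ⟨δ, rfl⟩ hne
    exact hX ε δ (fun h => hne (h ▸ rfl))
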